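/- arXiv:1803.04547 — 2 statements merged into one kernel-verified Lean document; each statement's English description precedes it below -/
import Mathlib

section
/- Deterministic form of the SC-RR consistency theorem: consider the SBM mean structure with k = min(k1,k2), and define Ψ̄1² = min_{s≠t} Σ_{ℓ=1}^{k2} π_{2ℓ}·(Ψ_{sℓ} − Ψ_{tℓ})² and Ψ̃1² = min_{s≠t} [ π_{1t}·Σ_{ℓ=1}^{k2} π_{2ℓ}·(Ψ_{sℓ} − Ψ_{tℓ})² ]. Let A_re ∈ ℝ^{n1×n2} satisfy ‖A_re − P‖_op ≤ t for some t > 0, let M be a best rank-k approximation of A_re (i.e., rank(M) ≤ k and ‖M − A_re‖_op ≤ σ_{k+1}(A_re)), let κ ≥ 1, and assume 32·(1+κ)²·k·t² < Ψ̃1². Then every κ-approximate k-means solution X̃ ∈ KMM(n1,n2,k1) for M satisfies Mis(X̃, P) ≤ 32·(1+κ)²·k·t²/Ψ̄1², where P is regarded as an element of KMM(n1,n2,k1). -/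
open Matrix

noncomputable section

/-- Frobenius norm of a real matrix. -/
def frob {m n : Type*} [Fintype m] [Fintype n] (M : Matrix m n ℝ) : ℝ :=
  Real.sqrt (∑ i, ∑ j, (M i j) ^ 2)

/-- ℓ2→ℓ2 operator norm of a real matrix: sup of ‖Mx‖₂ over the ℓ2 unit ball. -/
def opNorm {m n : Type*} [Fintype m] [Fintype n] (M : Matrix m n ℝ) : ℝ :=
  sSup {t | ∃ x : n → ℝ, ∑ j, (x j) ^ 2 ≤ 1 ∧ t = Real.sqrt (∑ i, (M.mulVec x i) ^ 2)}

/-- `Z` is a membership matrix: 0/1 entries, exactly one 1 per row. -/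
def IsMembership {n k : ℕ} (Z : Matrix (Fin n) (Fin k) ℝ) : Prop :=
  (∀ i j, Z i j = 0 ∨ Z i j = 1) ∧ ∀ i, ∃! j, Z i j = 1

/-- size of the `j`-th cluster of a membership matrix. -/
def clusterSize {n k : ℕ} (Z : Matrix (Fin n) (Fin k) ℝ) (j : Fin k) : ℕ :=
  Set.ncard {i | Z i j = 1}

/-- `X` has at most `k` distinct rows (is a k-means matrix). -/
def IsKMM {n d : ℕ} (k : ℕ) (X : Matrix (Fin n) (Fin d) ℝ) : Prop :=
  ∃ g : Fin n → Fin k, ∀ i i', g i = g i' → X i = X i'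

/-- `g` is a labeling consistent with the rows of `X` (same label iff equal rows). -/
def IsLabeling {n d k : ℕ} (X : Matrix (Fin n) (Fin d) ℝ) (g : Fin n → Fin k) : Prop :=
  ∀ i i', g i = g i' ↔ X i = X i'

/-- average misclassification rate between two k-means matrices (min over label matchings). -/
def Mis {n d d' : ℕ} (k : ℕ) (X : Matrix (Fin n) (Fin d) ℝ) (Y : Matrix (Fin n) (Fin d') ℝ) : ℝ :=
  sInf {t | ∃ g g' : Fin n → Fin k, IsLabeling X g ∧ IsLabeling Y g' ∧
    t = (Set.ncard {i | g i ≠ g' i} : ℝ) / n}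

/-- `Xtil` is a κ-approximate k-means solution for `Xhat`. -/
def IsKApprox {n d : ℕ} (k : ℕ) (κ : ℝ) (Xhat Xtil : Matrix (Fin n) (Fin d) ℝ) : Prop :=
  IsKMM k Xtil ∧ ∀ X : Matrix (Fin n) (Fin d) ℝ, IsKMM k X →
    frob (Xhat - Xtil) ≤ κ * frob (Xhat - X)

/-- `σ_{k+1}(A)` via the Eckart–Young–Mirsky characterization. -/
def svalSucc {m n : ℕ} (A : Matrix (Fin m) (Fin n) ℝ) (k : ℕ) : ℝ :=
  sInf {t | ∃ N : Matrix (Fin m) (Fin n) ℝ, N.rank ≤ k ∧ t = opNorm (A - N)}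

/-- `Ψ̄1²`: minimal π₂-weighted squared row separation of `Ψ`. -/
def PsiBarSq {k1 k2 : ℕ} (Ψ : Matrix (Fin k1) (Fin k2) ℝ) (π2 : Fin k2 → ℝ) : ℝ :=
  sInf {v | ∃ s t : Fin k1, s ≠ t ∧ v = ∑ ℓ, π2 ℓ * (Ψ s ℓ - Ψ t ℓ) ^ 2}

/-- `Ψ̃1²`: as `Ψ̄1²` but including the factor `π_{1t}`. -/
def PsiTilSq {k1 k2 : ℕ} (Ψ : Matrix (Fin k1) (Fin k2) ℝ)
    (π1 : Fin k1 → ℝ) (π2 : Fin k2 → ℝ) : ℝ :=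
  sInf {v | ∃ s t : Fin k1, s ≠ t ∧ v = π1 t * ∑ ℓ, π2 ℓ * (Ψ s ℓ - Ψ t ℓ) ^ 2}

/-!
Since `P` has rank at most `k`, `σ_{k+1}(A_re) ≤ t`, so `‖M - P‖_op ≤ 2t` and `rank (M - P) ≤ 2k`,
whence `‖M - P‖_F² ≤ 8kt²`; as `P` is itself a candidate k-means matrix,
`‖X̃ - P‖_F ≤ (1 + κ) ‖M - P‖_F`, so `‖X̃ - P‖_F² ≤ 8(1 + κ)²kt² =: ε`.

The rows of `P` are the centres `θ_c`, with `‖θ_s - θ_t‖² = Σ_ℓ π_{2ℓ} (Ψ_{sℓ} - Ψ_{tℓ})² / n₁`.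
Following Lei and Rinaldo, call row `i` far if it lies at distance at least `δ_c / 2` from its
centre, `δ_c` being the distance from `θ_c` to the nearest other centre. Counting against `ε`,
each cluster `c` has fewer than `n_c` far rows (this is where `Ψ̃₁²` enters) and there are at most
`4ε / min_c δ_c²` far rows in all. So every cluster has a near row, the k-means labels of the near
rows agree with the true labels up to a permutation, and only far rows can be misclassified.
-/

open Finset WithLp

section Norms

variable {m n : Type*} [Fintype m] [Fintype n]

lemma sq_frob (A : Matrix m n ℝ) : frob A ^ 2 = ∑ i, ∑ j, A i j ^ 2 :=
  Real.sq_sqrt (by positivity)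

lemma frob_nonneg (A : Matrix m n ℝ) : 0 ≤ frob A :=
  Real.sqrt_nonneg _

section Frobenius

attribute [local instance] Matrix.frobeniusNormedAddCommGroup

lemma frob_eq_norm (A : Matrix m n ℝ) : frob A = ‖A‖ := by
  rw [frobenius_norm_def, frob, Real.sqrt_eq_rpow]
  congr 1
  refine sum_congr rfl fun i _ => sum_congr rfl fun j _ => ?_
  rw [Real.norm_eq_abs, Real.rpow_two, sq_abs]

lemma frob_sub_le (A B C : Matrix m n ℝ) : frob (A - C) ≤ frob (A - B) + frob (B - C) := by
  simpa only [frob_eq_norm] using norm_sub_le_norm_sub_add_norm_sub A B C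

lemma frob_sub_comm (A B : Matrix m n ℝ) : frob (A - B) = frob (B - A) := by
  simp only [frob_eq_norm, norm_sub_rev]

end Frobenius

section L2Operator

open scoped Matrix.Norms.L2Operator

lemma norm_toLp_eq_sqrt {ι : Type*} [Fintype ι] (x : ι → ℝ) :
    ‖WithLp.toLp 2 x‖ = √(∑ i, x i ^ 2) := by
  simp [EuclideanSpace.norm_eq]

lemma opNorm_eq_norm [DecidableEq n] (A : Matrix m n ℝ) : opNorm A = ‖A‖ := by
  rw [l2_opNorm_def, ← ContinuousLinearMap.sSup_unitClosedBall_eq_norm, opNorm]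
  congr 1
  ext t
  simp only [Set.mem_image, Metric.mem_closedBall, dist_zero_right]
  constructor
  · rintro ⟨x, hx, rfl⟩
    refine ⟨WithLp.toLp 2 x, ?_, norm_toLp_eq_sqrt _⟩
    rwa [norm_toLp_eq_sqrt, Real.sqrt_le_one]
  · rintro ⟨x, hx, rfl⟩
    refine ⟨x.ofLp, ?_, norm_toLp_eq_sqrt _⟩
    rwa [← Real.sqrt_le_one, ← norm_toLp_eq_sqrt]

lemma opNorm_nonneg (A : Matrix m n ℝ) : 0 ≤ opNorm A := by
  classical
  exact opNorm_eq_norm A ▸ norm_nonneg A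

lemma opNorm_sub_le (A B C : Matrix m n ℝ) :
    opNorm (A - C) ≤ opNorm (A - B) + opNorm (B - C) := by
  classical
  simpa only [opNorm_eq_norm] using norm_sub_le_norm_sub_add_norm_sub A B C

lemma eigenvalues_transpose_mul_self_le [DecidableEq n] (A : Matrix m n ℝ)
    (hA : (Aᵀ * A).IsHermitian) (i : n) : hA.eigenvalues i ≤ opNorm A ^ 2 := by
  have : Nonempty n := ⟨i⟩
  have hspec := spectrum.norm_le_norm_of_mem (hA.eigenvalues_mem_spectrum_real i)
  have hnorm : ‖Aᵀ * A‖ = ‖A‖ * ‖A‖ := by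
    simpa using l2_opNorm_conjTranspose_mul_self A
  rw [opNorm_eq_norm, sq, ← hnorm]
  exact (le_abs_self _).trans hspec

end L2Operator

lemma sq_frob_eq_trace_transpose_mul_self (A : Matrix m n ℝ) :
    frob A ^ 2 = (Aᵀ * A).trace := by
  rw [sq_frob, sum_comm]
  simp only [trace, Matrix.diag, mul_apply, transpose_apply, sq]

lemma sq_frob_le_rank_mul_sq_opNorm (A : Matrix m n ℝ) :
    frob A ^ 2 ≤ A.rank * opNorm A ^ 2 := by
  classical
  have hA : (Aᵀ * A).IsHermitian := by
    simpa using isHermitian_conjTranspose_mul_self A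
  let nonzero := ({i | hA.eigenvalues i ≠ 0} : Finset n)
  have hcard : #nonzero = A.rank := by
    rw [← rank_transpose_mul_self, hA.rank_eq_card_non_zero_eigs, Fintype.card_subtype]
  calc frob A ^ 2 = ∑ i, hA.eigenvalues i := by
        simpa [sq_frob_eq_trace_transpose_mul_self] using hA.trace_eq_sum_eigenvalues
    _ = ∑ i ∈ nonzero, hA.eigenvalues i := (sum_filter_ne_zero _).symm
    _ ≤ ∑ _i ∈ nonzero, opNorm A ^ 2 :=
        sum_le_sum fun i _ => eigenvalues_transpose_mul_self_le A hA i
    _ = A.rank * opNorm A ^ 2 := by rw [sum_const, hcard, nsmul_eq_mul]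

end Norms

lemma rank_sub_le {m n : Type*} [Fintype n] (A B : Matrix m n ℝ) :
    (A - B).rank ≤ A.rank + B.rank := by
  have hrange : LinearMap.range (A - B).mulVecLin ≤
      LinearMap.range A.mulVecLin ⊔ LinearMap.range B.mulVecLin := by
    rintro _ ⟨x, rfl⟩
    rw [mulVecLin_apply, sub_mulVec]
    exact Submodule.sub_mem _ (Submodule.mem_sup_left ⟨x, rfl⟩)
      (Submodule.mem_sup_right ⟨x, rfl⟩)
  exact (Submodule.finrank_mono hrange).trans (Submodule.finrank_add_le_finrank_add_finrank _ _)

lemma svalSucc_le_opNorm_sub {m n k : ℕ} (A N : Matrix (Fin m) (Fin n) ℝ) (hN : N.rank ≤ k) :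
    svalSucc A k ≤ opNorm (A - N) :=
  csInf_le ⟨0, by rintro _ ⟨_, -, rfl⟩; exact opNorm_nonneg _⟩ ⟨N, hN, rfl⟩

theorem sq_frob_sub_le_of_isKApprox {n d k k' : ℕ} {A P M X : Matrix (Fin n) (Fin d) ℝ} {t κ : ℝ}
    (hPkmm : IsKMM k' P) (hPrank : P.rank ≤ k) (hAP : opNorm (A - P) ≤ t)
    (hMrank : M.rank ≤ k) (hMbest : opNorm (M - A) ≤ svalSucc A k) (hX : IsKApprox k' κ M X) :
    frob (X - P) ^ 2 ≤ 8 * (1 + κ) ^ 2 * k * t ^ 2 := by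
  have hop : opNorm (M - P) ≤ 2 * t := by
    linarith [opNorm_sub_le M A P, svalSucc_le_opNorm_sub A P hPrank, hMbest, hAP]
  have hrank : ((M - P).rank : ℝ) ≤ 2 * k := by
    have := (rank_sub_le M P).trans (add_le_add hMrank hPrank)
    rw [two_mul]
    exact_mod_cast this
  have hMP : frob (M - P) ^ 2 ≤ 2 * k * (2 * t) ^ 2 :=
    (sq_frob_le_rank_mul_sq_opNorm _).trans
      (mul_le_mul hrank (pow_le_pow_left₀ (opNorm_nonneg _) hop 2) (sq_nonneg _) (by positivity))
  have hXP : frob (X - P) ≤ (1 + κ) * frob (M - P) := by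
    linarith [frob_sub_le X M P, frob_sub_comm X M, hX.2 P hPkmm]
  calc frob (X - P) ^ 2 ≤ ((1 + κ) * frob (M - P)) ^ 2 :=
        pow_le_pow_left₀ (frob_nonneg _) hXP 2
    _ = (1 + κ) ^ 2 * frob (M - P) ^ 2 := by ring
    _ ≤ (1 + κ) ^ 2 * (2 * k * (2 * t) ^ 2) := by gcongr
    _ = 8 * (1 + κ) ^ 2 * k * t ^ 2 := by ring

lemma ne_of_dist_lt_of_add_le_dist {E : Type*} [PseudoMetricSpace E] {a b p q : E} {r s : ℝ}
    (hpq : r + s ≤ dist p q) (ha : dist a p < r) (hb : dist b q < s) : a ≠ b := by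
  rintro rfl
  linarith [dist_triangle_left p q a]

lemma card_mul_le_of_sum_le {ι : Type*} [Fintype ι] {f : ι → ℝ} {ε a : ℝ} (hf : ∀ i, 0 ≤ f i)
    (hsum : ∑ i, f i ≤ ε) (s : Finset ι) (hs : ∀ i ∈ s, a ≤ f i) : #s * a ≤ ε :=
  calc #s * a = #s • a := (nsmul_eq_mul _ _).symm
    _ ≤ ∑ i ∈ s, f i := card_nsmul_le_sum s f a hs
    _ ≤ ∑ i, f i := sum_le_sum_of_subset_of_nonneg (subset_univ s) fun i _ _ => hf i
    _ ≤ ε := hsum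

section KMeans

variable {E : Type*} [PseudoMetricSpace E] {n k : ℕ} {θ : Fin k → E} {g : Fin n → Fin k}
  {x : Fin n → E} {r : Fin k → ℝ}

lemma injective_of_forall_exists_dist_lt
    (hsep : ∀ c c', c ≠ c' → r c + r c' ≤ dist (θ c) (θ c'))
    (hnear : ∀ c, ∃ i, g i = c ∧ dist (x i) (θ c) < r c) : Function.Injective θ := by
  intro c c' hθ
  by_contra hne
  have hpos : ∀ c, 0 < r c := fun c => by
    obtain ⟨i, -, hi⟩ := hnear c
    exact dist_nonneg.trans_lt hi
  have := hsep c c' hne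
  rw [hθ, dist_self] at this
  linarith [hpos c, hpos c']

-- Near representatives of distinct clusters cannot share a k-means centre, so their labels form a
-- permutation `σ`; a near row can only share its label with the representative of its own cluster.
lemma exists_labeling_eq_perm_of_forall_exists_dist_lt
    (hsep : ∀ c c', c ≠ c' → r c + r c' ≤ dist (θ c) (θ c'))
    (hx : ∃ h : Fin n → Fin k, ∀ i i', h i = h i' → x i = x i')
    (hnear : ∀ c, ∃ i, g i = c ∧ dist (x i) (θ c) < r c) :
    ∃ (h : Fin n → Fin k) (σ : Equiv.Perm (Fin k)), (∀ i i', h i = h i' ↔ x i = x i') ∧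
      ∀ i, dist (x i) (θ (g i)) < r (g i) → h i = σ (g i) := by
  obtain ⟨h, hh⟩ := hx
  choose rep hrep_label hrep_near using hnear
  have hsplit : ∀ c c' i i', c ≠ c' → dist (x i) (θ c) < r c → dist (x i') (θ c') < r c' →
      x i ≠ x i' := fun c c' _ _ hne => ne_of_dist_lt_of_add_le_dist (hsep c c' hne)
  have hinj : Function.Injective (h ∘ rep) := fun c c' hcc => by
    by_contra hne
    exact hsplit c c' _ _ hne (hrep_near c) (hrep_near c') (hh _ _ hcc)
  let σ := Equiv.ofBijective _ (Finite.injective_iff_bijective.1 hinj)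
  have hrep_eq : ∀ i, x (rep (σ.symm (h i))) = x i := fun i =>
    hh _ _ (σ.apply_symm_apply (h i))
  refine ⟨h, σ, fun i i' => ⟨hh i i', fun hxi => σ.symm.injective ?_⟩, fun i hi => ?_⟩
  · by_contra hne
    exact hsplit _ _ _ _ hne (hrep_near _) (hrep_near _)
      ((hrep_eq i).trans (hxi.trans (hrep_eq i').symm))
  · have hlabel : σ.symm (h i) = g i := by
      by_contra hne
      exact hsplit _ _ _ _ hne (hrep_near _) hi (hrep_eq i)
    rw [← hlabel, σ.apply_symm_apply]

end KMeans

lemma sq_frob_sub_eq_sum_sq_dist {m d : Type*} [Fintype m] [Fintype d] (X P : Matrix m d ℝ) :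
    frob (X - P) ^ 2 = ∑ i, dist (toLp 2 (X i)) (toLp 2 (P i)) ^ 2 := by
  rw [sq_frob]
  refine sum_congr rfl fun i _ => ?_
  rw [EuclideanSpace.dist_eq, Real.sq_sqrt (by positivity)]
  simp [Real.dist_eq, sq_abs]

lemma isLabeling_iff_toLp {n d k : ℕ} (X : Matrix (Fin n) (Fin d) ℝ) (h : Fin n → Fin k) :
    IsLabeling X h ↔ ∀ i i', h i = h i' ↔ toLp 2 (X i) = toLp 2 (X i') := by
  simp [IsLabeling]

lemma Mis_le_card_far {n d k : ℕ} {X P : Matrix (Fin n) (Fin d) ℝ} (hX : IsKMM k X)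
    {θ : Fin k → EuclideanSpace ℝ (Fin d)} {g : Fin n → Fin k} (hP : ∀ i, toLp 2 (P i) = θ (g i))
    {r : Fin k → ℝ} (hsep : ∀ c c', c ≠ c' → r c + r c' ≤ dist (θ c) (θ c'))
    (hnear : ∀ c, ∃ i, g i = c ∧ dist (toLp 2 (X i)) (θ c) < r c) :
    Mis k X P ≤ #{i | r (g i) ≤ dist (toLp 2 (X i)) (θ (g i))} / n := by
  have hX' : ∃ h : Fin n → Fin k, ∀ i i', h i = h i' → toLp 2 (X i) = toLp 2 (X i') := by
    obtain ⟨h, hh⟩ := hX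
    exact ⟨h, fun i i' hi => congrArg _ (hh i i' hi)⟩
  obtain ⟨h, σ, hlabX, hagree⟩ := exists_labeling_eq_perm_of_forall_exists_dist_lt hsep hX' hnear
  have hθ := injective_of_forall_exists_dist_lt hsep hnear
  have hlabP : IsLabeling P (σ ∘ g) := by
    rw [isLabeling_iff_toLp]
    intro i i'
    simp only [Function.comp_apply, σ.injective.eq_iff, hP, hθ.eq_iff]
  have hsub : {i | h i ≠ (σ ∘ g) i} ⊆
      ({i | r (g i) ≤ dist (toLp 2 (X i)) (θ (g i))} : Finset _) := by
    intro i hi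
    simpa using mt (hagree i) hi
  calc Mis k X P ≤ (Set.ncard {i | h i ≠ (σ ∘ g) i} : ℝ) / n :=
        csInf_le ⟨0, by rintro _ ⟨_, _, -, -, rfl⟩; positivity⟩
          ⟨h, σ ∘ g, (isLabeling_iff_toLp X h).2 hlabX, hlabP, rfl⟩
    _ ≤ _ := by
        gcongr
        rw [← Set.ncard_coe_finset]
        exact Set.ncard_le_ncard hsub

theorem Mis_le_of_sq_frob_sub_le {n d k : ℕ} {X P : Matrix (Fin n) (Fin d) ℝ} (hX : IsKMM k X)
    {θ : Fin k → EuclideanSpace ℝ (Fin d)} {g : Fin n → Fin k} (hP : ∀ i, toLp 2 (P i) = θ (g i))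
    {δ : Fin k → ℝ} (hδ : ∀ c c', c ≠ c' → δ c ≤ dist (θ c) (θ c'))
    {ρ ε : ℝ} (hρ : 0 < ρ) (hρδ : ∀ c, ρ ≤ δ c)
    (hfrob : frob (X - P) ^ 2 ≤ ε) (hsize : ∀ c, 4 * ε < #{i | g i = c} * δ c ^ 2) :
    Mis k X P ≤ 4 * ε / (n * ρ ^ 2) := by
  set e : Fin n → ℝ := fun i => dist (toLp 2 (X i)) (θ (g i)) ^ 2
  have hsum : ∑ i, e i ≤ ε := by
    rw [sq_frob_sub_eq_sum_sq_dist] at hfrob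
    simpa only [e, hP] using hfrob
  have he : ∀ i, 0 ≤ e i := fun i => sq_nonneg _
  have hsq : ∀ {a : ℝ} {i}, 0 ≤ a → a ≤ dist (toLp 2 (X i)) (θ (g i)) → a ^ 2 ≤ e i :=
    fun ha hai => pow_le_pow_left₀ ha hai 2
  have hsep : ∀ c c', c ≠ c' → δ c / 2 + δ c' / 2 ≤ dist (θ c) (θ c') := fun c c' hne => by
    linarith [hδ c c' hne, hδ c' c hne.symm, dist_comm (θ c) (θ c')]
  have hnear : ∀ c, ∃ i, g i = c ∧ dist (toLp 2 (X i)) (θ c) < δ c / 2 := by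
    intro c
    by_contra! hfar
    have := card_mul_le_of_sum_le he hsum {i | g i = c} (a := (δ c / 2) ^ 2) fun i hi => by
      obtain ⟨-, rfl⟩ := mem_filter.1 hi
      exact hsq (by linarith [hρδ (g i)]) (hfar i rfl)
    linarith [hsize c]
  have hfar := card_mul_le_of_sum_le he hsum {i | δ (g i) / 2 ≤ dist (toLp 2 (X i)) (θ (g i))}
    (a := (ρ / 2) ^ 2) fun i hi =>
      hsq (by positivity) (by linarith [hρδ (g i), (mem_filter.1 hi).2])
  calc Mis k X P ≤ #{i | δ (g i) / 2 ≤ dist (toLp 2 (X i)) (θ (g i))} / n :=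
        Mis_le_card_far hX hP (r := fun c => δ c / 2) hsep hnear
    _ ≤ 4 * ε / ρ ^ 2 / n := by
        gcongr
        rw [le_div_iff₀ (by positivity)]
        linarith
    _ = 4 * ε / (n * ρ ^ 2) := by rw [div_div, mul_comm (ρ ^ 2)]

theorem Mis_le_of_sq_frob_sub_le_of_pairwise {n d k : ℕ} {X P : Matrix (Fin n) (Fin d) ℝ}
    (hX : IsKMM k X) {θ : Fin k → EuclideanSpace ℝ (Fin d)} {g : Fin n → Fin k}
    (hP : ∀ i, toLp 2 (P i) = θ (g i)) {a b : Fin k} (hab : a ≠ b) {ρ ε : ℝ} (hρ : 0 < ρ)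
    (hsep : ∀ c c', c ≠ c' → ρ ≤ dist (θ c) (θ c'))
    (hsize : ∀ c c', c ≠ c' → 4 * ε < #{i | g i = c} * dist (θ c) (θ c') ^ 2)
    (hfrob : frob (X - P) ^ 2 ≤ ε) :
    Mis k X P ≤ 4 * ε / (n * ρ ^ 2) := by
  set δ : Fin k → ℝ := fun c => ⨅ c' : {c' // c' ≠ c}, dist (θ c) (θ c')
  have hδ : ∀ c, ∃ c', c ≠ c' ∧ δ c = dist (θ c) (θ c') := fun c => by
    have : Nonempty {c' // c' ≠ c} := if h : a = c then ⟨⟨b, h ▸ hab.symm⟩⟩ else ⟨⟨a, h⟩⟩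
    obtain ⟨⟨c', hc'⟩, h⟩ :=
      exists_eq_ciInf_of_finite (f := fun c' : {c' // c' ≠ c} => dist (θ c) (θ c'))
    exact ⟨c', hc'.symm, h.symm⟩
  have hδ_le : ∀ c c', c ≠ c' → δ c ≤ dist (θ c) (θ c') := fun c c' h =>
    ciInf_le (Set.finite_range fun c'' : {c'' // c'' ≠ c} => dist (θ c) (θ c'')).bddBelow
      ⟨c', h.symm⟩
  refine Mis_le_of_sq_frob_sub_le hX hP hδ_le hρ (fun c => ?_) hfrob (fun c => ?_)
  all_goals obtain ⟨c', hcc', hδc⟩ := hδ c; rw [hδc]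
  exacts [hsep c c' hcc', hsize c c' hcc']

section Pairs

variable {ι : Type*} (f : ι → ι → ℝ)

lemma finite_pairs [Finite ι] : {v | ∃ s t, s ≠ t ∧ v = f s t}.Finite :=
  (Set.finite_range fun p : ι × ι => f p.1 p.2).subset
    (by rintro _ ⟨s, t, -, rfl⟩; exact ⟨(s, t), rfl⟩)

lemma sInf_pairs_le [Finite ι] {s t : ι} (h : s ≠ t) :
    sInf {v | ∃ s t, s ≠ t ∧ v = f s t} ≤ f s t :=
  csInf_le (finite_pairs f).bddBelow ⟨s, t, h, rfl⟩

lemma exists_eq_sInf_pairs [Finite ι] {s t : ι} (h : s ≠ t) :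
    ∃ s t, s ≠ t ∧ sInf {v | ∃ s t, s ≠ t ∧ v = f s t} = f s t :=
  Set.Nonempty.csInf_mem (s := {v | ∃ s t, s ≠ t ∧ v = f s t}) ⟨f s t, s, t, h, rfl⟩
    (finite_pairs f)

lemma exists_ne_of_sInf_pairs_ne_zero (h : sInf {v | ∃ s t, s ≠ t ∧ v = f s t} ≠ 0) :
    ∃ s t : ι, s ≠ t := by
  by_contra! hall
  refine h ?_
  convert Real.sInf_empty
  exact Set.eq_empty_of_forall_notMem fun _ ⟨s, t, hst, _⟩ => hst (hall s t)

end Pairs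

lemma IsMembership.exists_eq_one_submatrix {n k : ℕ} {Z : Matrix (Fin n) (Fin k) ℝ}
    (hZ : IsMembership Z) :
    ∃ g : Fin n → Fin k, Z = (1 : Matrix (Fin k) (Fin k) ℝ).submatrix g id := by
  choose g hg using hZ.2
  refine ⟨g, ext fun i j => ?_⟩
  rw [submatrix_apply, one_apply, id]
  split_ifs with h
  · exact h ▸ (hg i).1
  · exact (hZ.1 i j).resolve_right fun h1 => h ((hg i).2 j h1).symm

lemma clusterSize_one_submatrix {n k : ℕ} (g : Fin n → Fin k) (c : Fin k) :
    clusterSize ((1 : Matrix (Fin k) (Fin k) ℝ).submatrix g id) c = #{i | g i = c} := by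
  rw [clusterSize, ← Set.ncard_coe_finset]
  congr
  ext i
  simp [one_apply]

lemma one_submatrix_mul_mul_transpose {n1 n2 k1 k2 : ℕ} (g1 : Fin n1 → Fin k1)
    (g2 : Fin n2 → Fin k2) (B : Matrix (Fin k1) (Fin k2) ℝ) :
    (1 : Matrix (Fin k1) (Fin k1) ℝ).submatrix g1 id * B *
      ((1 : Matrix (Fin k2) (Fin k2) ℝ).submatrix g2 id)ᵀ = B.submatrix g1 g2 := by
  ext i j
  simp [mul_apply, one_apply]

lemma sq_dist_toLp_comp {n k : ℕ} (g : Fin n → Fin k) (u v : Fin k → ℝ) :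
    dist (toLp 2 (u ∘ g)) (toLp 2 (v ∘ g)) ^ 2 = ∑ ℓ, #{j | g j = ℓ} * (u ℓ - v ℓ) ^ 2 := by
  rw [EuclideanSpace.dist_eq, Real.sq_sqrt (by positivity)]
  simp only [Function.comp_apply, Real.dist_eq, sq_abs]
  rw [← sum_fiberwise' univ g fun ℓ => (u ℓ - v ℓ) ^ 2]
  simp

lemma sq_dist_rows_smul_comp {n1 n2 k1 k2 : ℕ} (Ψ : Matrix (Fin k1) (Fin k2) ℝ)
    (g2 : Fin n2 → Fin k2) (s t : Fin k1) :
    dist (toLp 2 (((√(n1 * n2 : ℝ))⁻¹ • Ψ) s ∘ g2))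
      (toLp 2 (((√(n1 * n2 : ℝ))⁻¹ • Ψ) t ∘ g2)) ^ 2 =
      (∑ ℓ, (#{j | g2 j = ℓ} / n2 : ℝ) * (Ψ s ℓ - Ψ t ℓ) ^ 2) / n1 := by
  rw [sq_dist_toLp_comp, sum_div]
  refine sum_congr rfl fun ℓ _ => ?_
  simp only [Matrix.smul_apply, smul_eq_mul, ← mul_sub, mul_pow, inv_pow,
    Real.sq_sqrt (by positivity : (0 : ℝ) ≤ n1 * n2)]
  ring

theorem Mis_le_of_sq_frob_sub_smul_submatrix_le {n1 n2 k1 k2 : ℕ} (g1 : Fin n1 → Fin k1)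
    (g2 : Fin n2 → Fin k2) (Ψ : Matrix (Fin k1) (Fin k2) ℝ) {X : Matrix (Fin n1) (Fin n2) ℝ}
    (hX : IsKMM k1 X) {ε : ℝ}
    (hfrob : frob (X - ((√(n1 * n2 : ℝ))⁻¹ • Ψ).submatrix g1 g2) ^ 2 ≤ ε)
    (hcond : 4 * ε < PsiTilSq Ψ (fun s => (#{i | g1 i = s} : ℝ) / n1)
      (fun ℓ => (#{j | g2 j = ℓ} : ℝ) / n2)) :
    Mis k1 X (((√(n1 * n2 : ℝ))⁻¹ • Ψ).submatrix g1 g2) ≤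
      4 * ε / PsiBarSq Ψ (fun ℓ => (#{j | g2 j = ℓ} : ℝ) / n2) := by
  set π1 : Fin k1 → ℝ := fun s => #{i | g1 i = s} / n1
  set π2 : Fin k2 → ℝ := fun ℓ => #{j | g2 j = ℓ} / n2
  set sep : Fin k1 → Fin k1 → ℝ := fun s t => ∑ ℓ, π2 ℓ * (Ψ s ℓ - Ψ t ℓ) ^ 2
  set θ : Fin k1 → EuclideanSpace ℝ (Fin n2) :=
    fun c => toLp 2 (((√(n1 * n2 : ℝ))⁻¹ • Ψ) c ∘ g2)
  have hdist : ∀ s t, dist (θ s) (θ t) ^ 2 = sep s t / n1 := sq_dist_rows_smul_comp Ψ g2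
  have hTil : ∀ s t, s ≠ t → PsiTilSq Ψ π1 π2 ≤ π1 t * sep s t := fun s t h =>
    sInf_pairs_le (fun s t => π1 t * sep s t) h
  have hTil_pos : 0 < PsiTilSq Ψ π1 π2 :=
    (mul_nonneg (by norm_num) ((sq_nonneg _).trans hfrob)).trans_lt hcond
  obtain ⟨a, b, hab⟩ := exists_ne_of_sInf_pairs_ne_zero _ hTil_pos.ne'
  obtain ⟨s, t, hst, hBar⟩ : ∃ s t, s ≠ t ∧ PsiBarSq Ψ π2 = sep s t :=
    exists_eq_sInf_pairs sep hab
  have hpos : 0 < π1 t * sep s t := hTil_pos.trans_le (hTil s t hst)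
  -- with `n1 = 0` every `π1 t` would be the junk value `x / 0 = 0`
  have hn1 : (0 : ℝ) < n1 := Nat.cast_pos.2 (Nat.pos_of_ne_zero fun h => by simp [π1, h] at hpos)
  have hBar_pos : 0 < PsiBarSq Ψ π2 := hBar ▸ pos_of_mul_pos_right hpos (by positivity)
  have hρ : 0 < √(PsiBarSq Ψ π2 / n1) := Real.sqrt_pos.2 (div_pos hBar_pos hn1)
  calc Mis k1 X (((√(n1 * n2 : ℝ))⁻¹ • Ψ).submatrix g1 g2)
      ≤ 4 * ε / (n1 * √(PsiBarSq Ψ π2 / n1) ^ 2) := by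
        refine Mis_le_of_sq_frob_sub_le_of_pairwise hX (θ := θ) (fun i => rfl) hab hρ
          (fun c c' h => ?_) (fun c c' h => ?_) hfrob
        · calc √(PsiBarSq Ψ π2 / n1) ≤ √(dist (θ c) (θ c') ^ 2) := by
                rw [hdist]
                gcongr
                exact sInf_pairs_le sep h
            _ = dist (θ c) (θ c') := Real.sqrt_sq dist_nonneg
        · rw [dist_comm, hdist, ← mul_div_assoc, mul_div_right_comm]
          exact hcond.trans_le (hTil c' c h.symm)
    _ = 4 * ε / PsiBarSq Ψ π2 := by
        rw [Real.sq_sqrt (div_pos hBar_pos hn1).le, mul_div_cancel₀ _ hn1.ne']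

theorem stmt13_general (n1 n2 k1 k2 : ℕ)
    (Z1 : Matrix (Fin n1) (Fin k1) ℝ) (Z2 : Matrix (Fin n2) (Fin k2) ℝ)
    (hZ1 : IsMembership Z1) (hZ2 : IsMembership Z2)
    (Ψ : Matrix (Fin k1) (Fin k2) ℝ)
    (P : Matrix (Fin n1) (Fin n2) ℝ)
    (hP : P = Z1 * ((Real.sqrt ((n1 : ℝ) * n2))⁻¹ • Ψ) * Z2ᵀ)
    (t : ℝ)
    (Are : Matrix (Fin n1) (Fin n2) ℝ) (hcon : opNorm (Are - P) ≤ t)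
    (M : Matrix (Fin n1) (Fin n2) ℝ)
    (hMrank : M.rank ≤ min k1 k2)
    (hMbest : opNorm (M - Are) ≤ svalSucc Are (min k1 k2))
    (κ : ℝ)
    (hcond : 32 * (1 + κ) ^ 2 * (min k1 k2) * t ^ 2 <
      PsiTilSq Ψ (fun s => (clusterSize Z1 s : ℝ) / n1)
        (fun ℓ => (clusterSize Z2 ℓ : ℝ) / n2)) :
    ∀ Xt : Matrix (Fin n1) (Fin n2) ℝ, IsKApprox k1 κ M Xt →
      Mis k1 Xt P ≤ 32 * (1 + κ) ^ 2 * (min k1 k2) * t ^ 2 /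
        PsiBarSq Ψ (fun ℓ => (clusterSize Z2 ℓ : ℝ) / n2) := by
  intro Xt hXt
  have hPrank : P.rank ≤ min k1 k2 := hP ▸ (rank_mul_le_left _ _).trans
    ((rank_mul_le_right _ _).trans (le_min (rank_le_height _) (rank_le_width _)))
  obtain ⟨g1, rfl⟩ := hZ1.exists_eq_one_submatrix
  obtain ⟨g2, rfl⟩ := hZ2.exists_eq_one_submatrix
  rw [one_submatrix_mul_mul_transpose] at hP
  subst hP
  have hPkmm : IsKMM k1 (((√(n1 * n2 : ℝ))⁻¹ • Ψ).submatrix g1 g2) :=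
    ⟨g1, fun i i' h => funext fun j => by rw [submatrix_apply, submatrix_apply, h]⟩
  have hfrob := sq_frob_sub_le_of_isKApprox hPkmm hPrank hcon hMrank hMbest hXt
  simp only [clusterSize_one_submatrix] at hcond ⊢
  convert Mis_le_of_sq_frob_sub_smul_submatrix_le g1 g2 Ψ hXt.1 hfrob (by linarith) using 2
  ring

/-- Theorem 5.2 (deterministic form of the SC-RR consistency theorem). -/
theorem stmt13 (n1 n2 k1 k2 : ℕ)
    (Z1 : Matrix (Fin n1) (Fin k1) ℝ) (Z2 : Matrix (Fin n2) (Fin k2) ℝ)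
    (hZ1 : IsMembership Z1) (hZ2 : IsMembership Z2)
    (hpos1 : ∀ j, 0 < clusterSize Z1 j) (hpos2 : ∀ j, 0 < clusterSize Z2 j)
    (Ψ : Matrix (Fin k1) (Fin k2) ℝ)
    (P : Matrix (Fin n1) (Fin n2) ℝ)
    (hP : P = Z1 * ((Real.sqrt ((n1 : ℝ) * n2))⁻¹ • Ψ) * Z2ᵀ)
    (t : ℝ) (ht : 0 < t)
    (Are : Matrix (Fin n1) (Fin n2) ℝ) (hcon : opNorm (Are - P) ≤ t)
    (M : Matrix (Fin n1) (Fin n2) ℝ)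
    (hMrank : M.rank ≤ min k1 k2)
    (hMbest : opNorm (M - Are) ≤ svalSucc Are (min k1 k2))
    (κ : ℝ) (hκ : 1 ≤ κ)
    (hcond : 32 * (1 + κ) ^ 2 * (min k1 k2) * t ^ 2 <
      PsiTilSq Ψ (fun s => (clusterSize Z1 s : ℝ) / n1)
        (fun ℓ => (clusterSize Z2 ℓ : ℝ) / n2)) :
    ∀ Xt : Matrix (Fin n1) (Fin n2) ℝ, IsKApprox k1 κ M Xt →
      Mis k1 Xt P ≤ 32 * (1 + κ) ^ 2 * (min k1 k2) * t ^ 2 /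
        PsiBarSq Ψ (fun ℓ => (clusterSize Z2 ℓ : ℝ) / n2) :=
  stmt13_general n1 n2 k1 k2 Z1 Z2 hZ1 hZ2 Ψ P hP t Are hcon M hMrank hMbest κ hcond

end
end

section
/- Guarantee for the greedy covering replacement of the k-means step: let x1,…,xn ∈ ℝ^d take exactly k distinct values q1,…,qk, defining clusters C_r = {i : x_i = q_r} with sizes n_r, n∧ = min_r n_r, and separations δ_r = min_{ℓ≠r} ‖q_ℓ − q_r‖_2, δ∧ = min_r δ_r. Let x̂1,…,x̂n ∈ ℝ^d satisfy Σ_{i=1}^n ‖x_i − x̂_i‖_2² ≤ ε², and set d(i,j) = ‖x̂_i − x̂_j‖_2. Assume for some γ ∈ (0,1) and β ≥ 1: (i) n_r ≤ β·n∧ for all r ∈ [k]; (ii) 2ε/√(γ·n∧) < δ∧/3; (iii) (γ/(1−γ))·β + γ < 1 − γ. Let ρ ∈ [2ε/√(γ·n∧), δ∧/3), and let Ĉ1,…,Ĉk ⊆ [n] be produced by any execution of the greedy algorithm: starting with S = [n], repeat for r = 1,…,k: choose i0 ∈ S maximizing the size of B(i0) = {j ∈ S : d(i0,j) ≤ ρ},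 set Ĉ_r = B(i0), and replace S by S \ Ĉ_r. Then there is a permutation σ of [k] such that Σ_{r=1}^k |C_{σ(r)} \ Ĉ_r| ≤ 8·ε²/ρ²; in particular the fraction of misclassified or unlabeled points is at most 8·ε²/(n·ρ²). -/
/-!
Call a point bad when its estimate `x̂ᵢ` lies more than `ρ/2` from `xᵢ`. By Markov's inequality
there are at most `4ε²/ρ² ≤ γ n∧` bad points, and `3γ < 1` by (iii), so every cluster has more
than twice as many good points as there are bad points. Good points of one cluster are within `ρ`
of each other, and since `δ∧ > 3ρ` no `ρ`-ball contains good points of two clusters.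
Inductively, as long as some cluster still has all its good points, the greedy ball is at least
as large as that cluster's good part. A ball meeting no such untouched cluster would hold only
bad points and the at most `|B|` surviving good points of one cluster already hit, too few; so
the ball captures a fresh cluster, missing at most as many of its good points as it contains bad
points. Matching each ball with the cluster it captures gives the permutation, and the
misclassified points number at most twice the bad ones.
-/
open Matrix Finset

attribute [local instance] Classical.propDecidable

noncomputable section

/-- Euclidean distance between two vectors. -/
def dist2 {d : Type*} [Fintype d] (u v : d → ℝ) : ℝ :=
  Real.sqrt (∑ j, (u j - v j) ^ 2)

/-- An execution of the greedy covering algorithm (Algorithm 4) with pairwise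
distances `dd` and radius `ρ`, producing clusters `C 0, …, C (k-1)`:
starting from `S 0 = [n]`, at stage `r` a point `i0 ∈ S r` maximizing the size of
`B(i0) = {j ∈ S r : dd i0 j ≤ ρ}` is chosen (ties broken arbitrarily),
`C r = B(i0)`, and `S (r+1) = S r \ C r`. -/
def GreedyExec {n k : ℕ} (dd : Fin n → Fin n → ℝ) (ρ : ℝ)
    (C : Fin k → Finset (Fin n)) : Prop :=
  ∃ S : ℕ → Finset (Fin n), S 0 = Finset.univ ∧
    ∀ r : Fin k, ∃ i0 ∈ S (r : ℕ),
      (∀ i ∈ S (r : ℕ),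
        ((S (r : ℕ)).filter fun j => dd i j ≤ ρ).card ≤
          ((S (r : ℕ)).filter fun j => dd i0 j ≤ ρ).card) ∧
      C r = (S (r : ℕ)).filter (fun j => dd i0 j ≤ ρ) ∧
      S ((r : ℕ) + 1) = S (r : ℕ) \ C r

open Function

section Estimates

variable {ι : Type*}

lemma card_filter_mul_sq_lt_sum_sq {s : Finset ι} {f : ι → ℝ} {a : ℝ} (ha : 0 ≤ a)
    (hne : {i ∈ s | a < f i}.Nonempty) : #{i ∈ s | a < f i} * a ^ 2 < ∑ i ∈ s, f i ^ 2 :=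
  calc #{i ∈ s | a < f i} * a ^ 2 = ∑ _i ∈ {i ∈ s | a < f i}, a ^ 2 := by simp
    _ < ∑ i ∈ {i ∈ s | a < f i}, f i ^ 2 :=
      sum_lt_sum_of_nonempty hne fun i hi => pow_lt_pow_left₀ (mem_filter.1 hi).2 ha two_ne_zero
    _ ≤ ∑ i ∈ s, f i ^ 2 :=
      sum_le_sum_of_subset_of_nonneg (filter_subset _ _) fun _ _ _ => sq_nonneg _

lemma card_filter_lt_le_div_sq {s : Finset ι} {f : ι → ℝ} {a C : ℝ} (ha : 0 ≤ a)
    (hf : ∑ i ∈ s, f i ^ 2 ≤ C) (ha₀ : a = 0 → C ≤ 0) : (#{i ∈ s | a < f i} : ℝ) ≤ C / a ^ 2 := by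
  obtain hF | hF := {i ∈ s | a < f i}.eq_empty_or_nonempty
  · rw [hF, card_empty, Nat.cast_zero]
    exact div_nonneg ((sum_nonneg fun _ _ => sq_nonneg _).trans hf) (sq_nonneg a)
  have hlt := card_filter_mul_sq_lt_sum_sq ha hF
  obtain rfl | ha := ha.eq_or_lt
  · linarith [ha₀ rfl]
  · rw [le_div_iff₀ (by positivity)]
    linarith

lemma sq_le_sq_mul_of_div_sqrt_le {a b m : ℝ} (ha : 0 ≤ a) (hm : 0 < m) (h : a / √m ≤ b) :
    a ^ 2 ≤ b ^ 2 * m := by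
  have hab : a ≤ b * √m := (div_le_iff₀ (Real.sqrt_pos.2 hm)).1 h
  calc a ^ 2 ≤ (b * √m) ^ 2 := pow_le_pow_left₀ ha hab 2
    _ = b ^ 2 * m := by rw [mul_pow, Real.sq_sqrt hm.le]

lemma sInf_le_of_exists_eq [Finite ι] (g : ι → ℝ) (r : ι) : sInf {t | ∃ r, t = g r} ≤ g r :=
  csInf_le ((Set.finite_range g).subset (by rintro _ ⟨r, rfl⟩; exact ⟨r, rfl⟩)).bddBelow ⟨r, rfl⟩

lemma sInf_sInf_le_of_ne [Finite ι] (g : ι → ι → ℝ) {a b : ι} (hab : a ≠ b) :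
    sInf {t | ∃ r, t = sInf {u | ∃ ℓ, ℓ ≠ r ∧ u = g ℓ r}} ≤ g a b := by
  refine (sInf_le_of_exists_eq _ b).trans (csInf_le ?_ ⟨a, hab, rfl⟩)
  exact ((Set.finite_range (g · b)).subset (by rintro _ ⟨ℓ, -, rfl⟩; exact ⟨ℓ, rfl⟩)).bddBelow

lemma le_sInf_of_exists_eq [Nonempty ι] {g : ι → ℝ} {a : ℝ} (h : ∀ r, a ≤ g r) :
    a ≤ sInf {t | ∃ r, t = g r} :=
  le_csInf ⟨_, Classical.arbitrary ι, rfl⟩ fun _ ⟨r, hr⟩ => hr ▸ h r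

end Estimates

section Geometry

variable {E : Type*} [PseudoMetricSpace E] {p p' z z' w : E} {r : ℝ}

lemma dist_le_of_dist_le_half_of_eq (hp : dist p z ≤ r / 2) (hp' : dist p' z' ≤ r / 2)
    (h : p = p') : dist z z' ≤ r := by
  subst h
  linarith [dist_triangle_left z z' p]

lemma dist_le_three_mul_of_dist_le_half (hp : dist p z ≤ r / 2) (hp' : dist p' z' ≤ r / 2)
    (hw : dist w z ≤ r) (hw' : dist w z' ≤ r) : dist p p' ≤ 3 * r := by
  linarith [dist_triangle4 p z w p', dist_triangle w z' p', dist_comm z w, dist_comm z' p']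

end Geometry

lemma sum_card_inter_le_card_of_pairwise_disjoint {ι κ : Type*} [DecidableEq ι] [Fintype κ]
    {t : κ → Finset ι} (ht : Pairwise (Disjoint on t)) (s : Finset ι) : ∑ r, #(s ∩ t r) ≤ #s := by
  rw [← card_biUnion fun a _ b _ hab => (ht hab).mono inter_subset_right inter_subset_right]
  exact card_le_card (biUnion_subset.2 fun _ _ => inter_subset_left)

namespace GreedyCovering

variable {ι κ : Type*}

section Remaining

variable [DecidableEq ι] {k : ℕ} {S : ℕ → Finset ι} {C : Fin k → Finset ι}

lemma remaining_subset_of_le (hS : ∀ r : Fin k, S (r + 1) = S r \ C r) {a b : ℕ} (hab : a ≤ b)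
    (hb : b ≤ k) : S b ⊆ S a := by
  induction b, hab using Nat.le_induction with
  | base => exact subset_rfl
  | succ b _ ih =>
    have hstep : S (b + 1) = S b \ C ⟨b, hb⟩ := hS ⟨b, hb⟩
    exact hstep ▸ sdiff_subset.trans (ih (by omega))

lemma disjoint_remaining_of_lt (hS : ∀ r : Fin k, S (r + 1) = S r \ C r) {a b : Fin k}
    (hab : a < b) : Disjoint (C a) (S b) :=
  (hS a ▸ disjoint_sdiff).mono_right (remaining_subset_of_le hS hab b.is_lt.le)

end Remaining

variable [Fintype ι] [DecidableEq κ]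

def cluster (lab : ι → κ) (c : κ) : Finset ι := {i | lab i = c}

@[simp] lemma mem_cluster {lab : ι → κ} {c : κ} {i : ι} : i ∈ cluster lab c ↔ lab i = c := by
  simp [cluster]

lemma pairwise_disjoint_cluster (lab : ι → κ) : Pairwise (Disjoint on cluster lab) :=
  fun _ _ hcc' => disjoint_left.2 fun _ hi hi' =>
    hcc' ((mem_cluster.1 hi).symm.trans (mem_cluster.1 hi'))

variable [DecidableEq ι]

def core (lab : ι → κ) (B : Finset ι) (c : κ) : Finset ι := cluster lab c \ B

@[simp] lemma mem_core {lab : ι → κ} {B : Finset ι} {c : κ} {i : ι} :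
    i ∈ core lab B c ↔ lab i = c ∧ i ∉ B := by
  simp [core]

lemma card_cluster_le_card_core_add (lab : ι → κ) (B : Finset ι) (c : κ) :
    #(cluster lab c) ≤ #(core lab B c) + #B :=
  card_le_card_sdiff_add_card

-- `D` is the greedy ball, chosen among the remaining points `T`.
def Captures (lab : ι → κ) (B T D : Finset ι) (c : κ) : Prop :=
  core lab B c ⊆ T ∧ (∀ j ∈ D, j ∉ B → lab j = c) ∧ #(core lab B c \ D) ≤ #(B ∩ D)

variable {lab : ι → κ} {B : Finset ι}

lemma Captures.disjoint_core {T D : Finset ι} {c c' : κ} (h : Captures lab B T D c)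
    (hc' : c' ≠ c) : Disjoint (core lab B c') D :=
  disjoint_left.2 fun j hj hjD => hc' ((mem_core.1 hj).1.symm.trans (h.2.1 j hjD (mem_core.1 hj).2))

lemma Captures.inter_nonempty {T D : Finset ι} {c : κ} (h : Captures lab B T D c)
    (hc : #B < #(core lab B c)) : (core lab B c ∩ D).Nonempty := by
  have := card_sdiff_add_card_inter (core lab B c) D
  have := card_le_card (inter_subset_left : B ∩ D ⊆ B)
  rw [← card_pos]
  linarith [h.2.2]

lemma Captures.card_intact_le [Fintype κ] {T D : Finset ι} {c : κ} (h : Captures lab B T D c) :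
    #{c' | core lab B c' ⊆ T} ≤ #{c' | core lab B c' ⊆ T \ D} + 1 := by
  have hsub : ({c' | core lab B c' ⊆ T} : Finset κ).erase c ⊆
      ({c' | core lab B c' ⊆ T \ D} : Finset κ) := by
    intro c' hc'
    rw [mem_erase, mem_filter] at hc'
    exact mem_filter.2 ⟨mem_univ _, subset_sdiff.2 ⟨hc'.2.2, h.disjoint_core hc'.1⟩⟩
  have := card_le_card hsub
  have := pred_card_le_card_erase (s := ({c' | core lab B c' ⊆ T} : Finset κ)) (a := c)
  omega

lemma Captures.card_core_inter_sdiff_le {T D : Finset ι} {c : κ} (h : Captures lab B T D c)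
    (hbroken : ∀ c', ¬ core lab B c' ⊆ T → #(core lab B c' ∩ T) ≤ #B) (c' : κ)
    (hc' : ¬ core lab B c' ⊆ T \ D) : #(core lab B c' ∩ (T \ D)) ≤ #B := by
  obtain rfl | hne := eq_or_ne c' c
  · calc #(core lab B c' ∩ (T \ D)) ≤ #(core lab B c' \ D) := card_le_card (by grind)
      _ ≤ #(B ∩ D) := h.2.2
      _ ≤ #B := card_le_card inter_subset_left
  · have hdisj := h.disjoint_core hne
    rw [← inter_sdiff_assoc, (hdisj.mono_left inter_subset_left).sdiff_eq_left]
    exact hbroken c' fun hT => hc' (subset_sdiff.2 ⟨hT, hdisj⟩)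

lemma sum_card_cluster_sdiff_le [Fintype κ] (σ : Equiv.Perm κ) {C : κ → Finset ι}
    (hC : Pairwise (Disjoint on C)) (hσ : ∀ r, #(core lab B (σ r) \ C r) ≤ #(B ∩ C r)) :
    ∑ r, #(cluster lab (σ r) \ C r) ≤ 2 * #B := by
  have hsplit : ∀ r, #(cluster lab (σ r) \ C r) ≤ #(B ∩ C r) + #(B ∩ cluster lab (σ r)) := by
    intro r
    have hsub : cluster lab (σ r) \ C r ⊆ (core lab B (σ r) \ C r) ∪ (B ∩ cluster lab (σ r)) := by
      intro i; simp only [core, mem_sdiff, mem_union, mem_inter]; tauto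
    have := (card_le_card hsub).trans (card_union_le _ _)
    have := hσ r
    omega
  have hC' := sum_card_inter_le_card_of_pairwise_disjoint hC B
  have hcl := sum_card_inter_le_card_of_pairwise_disjoint
    ((pairwise_disjoint_cluster lab).comp_of_injective σ.injective) B
  calc ∑ r, #(cluster lab (σ r) \ C r)
      ≤ ∑ r, (#(B ∩ C r) + #(B ∩ cluster lab (σ r))) := sum_le_sum fun r _ => hsplit r
    _ ≤ 2 * #B := by rw [sum_add_distrib]; omega

section Step

variable {dd : ι → ι → ℝ} {ρ : ℝ}

lemma card_core_le_card_ball (hclose : ∀ i j, i ∉ B → j ∉ B → lab i = lab j → dd i j ≤ ρ)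
    {T : Finset ι} {i₀ : ι} (hmax : ∀ i ∈ T, #{j ∈ T | dd i j ≤ ρ} ≤ #{j ∈ T | dd i₀ j ≤ ρ})
    {c : κ} (hcT : core lab B c ⊆ T) : #(core lab B c) ≤ #{j ∈ T | dd i₀ j ≤ ρ} := by
  obtain h | ⟨g, hg⟩ := (core lab B c).eq_empty_or_nonempty
  · simp [h]
  have hsub : core lab B c ⊆ {j ∈ T | dd g j ≤ ρ} := fun j hj =>
    mem_filter.2 ⟨hcT hj, hclose g j (mem_core.1 hg).2 (mem_core.1 hj).2
      ((mem_core.1 hg).1.trans (mem_core.1 hj).1.symm)⟩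
  exact (card_le_card hsub).trans (hmax g (hcT hg))

lemma exists_captures_of_forall_card_ball_le
    (hclose : ∀ i j, i ∉ B → j ∉ B → lab i = lab j → dd i j ≤ ρ)
    (hball : ∀ i j j', j ∉ B → j' ∉ B → dd i j ≤ ρ → dd i j' ≤ ρ → lab j = lab j')
    (hcore : ∀ c, 2 * #B < #(core lab B c))
    {T : Finset ι} {i₀ : ι} (hmax : ∀ i ∈ T, #{j ∈ T | dd i j ≤ ρ} ≤ #{j ∈ T | dd i₀ j ≤ ρ})
    (hintact : ∃ c, core lab B c ⊆ T)
    (hbroken : ∀ c, ¬ core lab B c ⊆ T → #(core lab B c ∩ T) ≤ #B) :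
    ∃ c, Captures lab B T {j ∈ T | dd i₀ j ≤ ρ} c := by
  set D := {j ∈ T | dd i₀ j ≤ ρ}
  obtain ⟨c₀, hc₀⟩ := hintact
  have hD : #(core lab B c₀) ≤ #D := card_core_le_card_ball hclose hmax hc₀
  obtain ⟨g, hgD, hgB⟩ : ∃ g ∈ D, g ∉ B := by
    by_contra! hDB
    have := card_le_card (show D ⊆ B from hDB)
    have := hcore c₀
    omega
  have hlabel : ∀ j ∈ D, j ∉ B → lab j = lab g := fun j hj hjB =>
    hball i₀ j g hjB hgB (mem_filter.1 hj).2 (mem_filter.1 hgD).2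
  have hsplit : #D ≤ #(B ∩ D) + #(core lab B (lab g) ∩ D) := by
    refine (card_le_card fun j hj => ?_).trans (card_union_le _ _)
    by_cases hjB : j ∈ B
    · exact mem_union_left _ (mem_inter.2 ⟨hjB, hj⟩)
    · exact mem_union_right _ (mem_inter.2 ⟨mem_core.2 ⟨hlabel j hj hjB, hjB⟩, hj⟩)
  have hBD := card_le_card (inter_subset_left : B ∩ D ⊆ B)
  -- otherwise `D` holds at most `|B|` bad points and `|B|` good ones, fewer than the core of `c₀`
  have hcT : core lab B (lab g) ⊆ T := by
    by_contra hcT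
    have := hbroken _ hcT
    have := card_le_card (inter_subset_inter_left (filter_subset _ T) :
      core lab B (lab g) ∩ D ⊆ core lab B (lab g) ∩ T)
    have := hcore c₀
    omega
  refine ⟨lab g, hcT, hlabel, ?_⟩
  have := card_sdiff_add_card_inter (core lab B (lab g)) D
  have : #(core lab B (lab g)) ≤ #D := card_core_le_card_ball hclose hmax hcT
  omega

end Step

section Invariant

variable {k : ℕ} {S : ℕ → Finset ι} {C : Fin k → Finset ι}

lemma card_intact_and_card_broken_le {lab : ι → Fin k} (hS0 : S 0 = univ)
    (hS : ∀ r : Fin k, S (r + 1) = S r \ C r)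
    (hstep : ∀ r : Fin k, (∃ c, core lab B c ⊆ S r) →
      (∀ c, ¬ core lab B c ⊆ S r → #(core lab B c ∩ S r) ≤ #B) →
      ∃ c, Captures lab B (S r) (C r) c)
    {m : ℕ} (hm : m ≤ k) :
    k ≤ #{c | core lab B c ⊆ S m} + m ∧
      ∀ c, ¬ core lab B c ⊆ S m → #(core lab B c ∩ S m) ≤ #B := by
  induction m with
  | zero => simp [hS0]
  | succ m ih =>
    obtain ⟨hcount, hbroken⟩ := ih (by omega)
    obtain ⟨c₀, hc₀⟩ := card_pos.1 (show 0 < #{c | core lab B c ⊆ S m} by omega)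
    obtain ⟨c, hc⟩ := hstep ⟨m, hm⟩ ⟨c₀, (mem_filter.1 hc₀).2⟩ hbroken
    have hnext : S (m + 1) = S m \ C ⟨m, hm⟩ := hS ⟨m, hm⟩
    rw [hnext]
    have hlost : #{c | core lab B c ⊆ S m} ≤ #{c | core lab B c ⊆ S m \ C ⟨m, hm⟩} + 1 :=
      hc.card_intact_le
    exact ⟨by omega, hc.card_core_inter_sdiff_le hbroken⟩

end Invariant

theorem exists_perm_sum_card_cluster_sdiff_le {n k : ℕ} {dd : Fin n → Fin n → ℝ} {ρ : ℝ}
    {C : Fin k → Finset (Fin n)} (hexec : GreedyExec dd ρ C) {lab : Fin n → Fin k}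
    {B : Finset (Fin n)} (hclose : ∀ i j, i ∉ B → j ∉ B → lab i = lab j → dd i j ≤ ρ)
    (hball : ∀ i j j', j ∉ B → j' ∉ B → dd i j ≤ ρ → dd i j' ≤ ρ → lab j = lab j')
    (hcluster : ∀ c, 3 * #B < #(cluster lab c)) :
    ∃ σ : Equiv.Perm (Fin k), ∑ r, #(cluster lab (σ r) \ C r) ≤ 2 * #B := by
  have hcore : ∀ c, 2 * #B < #(core lab B c) := fun c => by
    have := card_cluster_le_card_core_add lab B c
    have := hcluster c
    omega
  obtain ⟨S, hS0, hrun⟩ := hexec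
  choose i₀ _ hmax hC hS using hrun
  have hstep : ∀ r : Fin k, (∃ c, core lab B c ⊆ S r) →
      (∀ c, ¬ core lab B c ⊆ S r → #(core lab B c ∩ S r) ≤ #B) →
      ∃ c, Captures lab B (S r) (C r) c := fun r =>
    hC r ▸ exists_captures_of_forall_card_ball_le hclose hball hcore (hmax r)
  have hcapt : ∀ r : Fin k, ∃ c, Captures lab B (S r) (C r) c := fun r => by
    obtain ⟨hcount, hbroken⟩ := card_intact_and_card_broken_le hS0 hS hstep r.is_lt.le
    obtain ⟨c, hc⟩ := card_pos.1 (show 0 < #{c | core lab B c ⊆ S r} by omega)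
    exact hstep r ⟨c, (mem_filter.1 hc).2⟩ hbroken
  choose σ hσ using hcapt
  -- a captured cluster has lost a core point, so it is never intact again
  have hinj : Injective σ := Injective.of_lt_imp_ne fun a b hab heq => by
    obtain ⟨w, hw⟩ := (hσ a).inter_nonempty (by have := hcore (σ a); omega)
    exact disjoint_left.1 (disjoint_remaining_of_lt hS hab) (mem_inter.1 hw).2
      ((hσ b).1 (heq ▸ (mem_inter.1 hw).1))
  have hdisj : Pairwise (Disjoint on C) := (pairwise_disjoint_on C).2 fun a b hab =>
    (disjoint_remaining_of_lt hS hab).mono_right (hC b ▸ filter_subset _ _)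
  exact ⟨Equiv.ofBijective σ hinj.bijective_of_finite,
    sum_card_cluster_sdiff_le _ hdisj fun r => (hσ r).2.2⟩

end GreedyCovering

lemma dist2_eq_dist {d : Type*} [Fintype d] (u v : d → ℝ) :
    dist2 u v = dist (WithLp.toLp 2 u) (WithLp.toLp 2 v) := by
  simp [dist2, EuclideanSpace.dist_eq, Real.dist_eq, sq_abs]

section KMeans

variable {n d k : ℕ} {x xh : Fin n → Fin d → ℝ} {ρ : ℝ}

lemma filter_eq_cluster {q : Fin k → Fin d → ℝ} (hq : Injective q) {lab : Fin n → Fin k}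
    (hlab : ∀ i, x i = q (lab i)) (c : Fin k) :
    univ.filter (fun i => x i = q c) = GreedyCovering.cluster lab c := by
  ext i
  simp [GreedyCovering.cluster, hlab i, hq.eq_iff]

def badSet (x xh : Fin n → Fin d → ℝ) (ρ : ℝ) : Finset (Fin n) :=
  {i | ρ / 2 < dist2 (x i) (xh i)}

lemma dist_le_half_of_notMem_badSet {i : Fin n} (hi : i ∉ badSet x xh ρ) :
    dist (WithLp.toLp 2 (x i)) (WithLp.toLp 2 (xh i)) ≤ ρ / 2 := by
  simpa [badSet, dist2_eq_dist] using hi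

lemma dist2_le_of_notMem_badSet_of_eq {i j : Fin n} (hi : i ∉ badSet x xh ρ)
    (hj : j ∉ badSet x xh ρ) (hij : x i = x j) : dist2 (xh i) (xh j) ≤ ρ := by
  rw [dist2_eq_dist]
  exact dist_le_of_dist_le_half_of_eq (dist_le_half_of_notMem_badSet hi)
    (dist_le_half_of_notMem_badSet hj) (by rw [hij])

lemma dist2_le_three_mul_of_notMem_badSet {i j j' : Fin n} (hj : j ∉ badSet x xh ρ)
    (hj' : j' ∉ badSet x xh ρ) (hij : dist2 (xh i) (xh j) ≤ ρ) (hij' : dist2 (xh i) (xh j') ≤ ρ) :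
    dist2 (x j) (x j') ≤ 3 * ρ := by
  rw [dist2_eq_dist] at hij hij' ⊢
  exact dist_le_three_mul_of_dist_le_half (dist_le_half_of_notMem_badSet hj)
    (dist_le_half_of_notMem_badSet hj') hij hij'

lemma card_badSet_le {ε N : ℝ} (hε0 : 0 ≤ ε) (hε : ∑ i, dist2 (x i) (xh i) ^ 2 ≤ ε ^ 2)
    (hN : 0 < N) (hρ : 2 * ε / √N ≤ ρ) :
    (#(badSet x xh ρ) : ℝ) ≤ 4 * ε ^ 2 / ρ ^ 2 ∧ 4 * ε ^ 2 / ρ ^ 2 ≤ N := by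
  have hρ0 : 0 ≤ ρ := (by positivity : 0 ≤ 2 * ε / √N).trans hρ
  have hερ := sq_le_sq_mul_of_div_sqrt_le (by positivity) hN hρ
  refine ⟨?_, div_le_of_le_mul₀ (sq_nonneg ρ) hN.le (by linarith)⟩
  have := card_filter_lt_le_div_sq (s := univ) (by linarith : 0 ≤ ρ / 2) hε fun h => by
    rw [show ρ = 0 by linarith] at hερ
    nlinarith
  exact this.trans_eq (by ring)

end KMeans

lemma three_mul_lt_one {γ β : ℝ} (hγ0 : 0 < γ) (hγ1 : γ < 1) (hβ : 1 ≤ β)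
    (hγβ : γ / (1 - γ) * β + γ < 1 - γ) : 3 * γ < 1 := by
  have : γ ≤ γ / (1 - γ) * β := by
    rw [div_mul_eq_mul_div, le_div_iff₀ (by linarith)]
    nlinarith
  linarith

theorem stmt19_general (n d k : ℕ)
    (x xh : Fin n → Fin d → ℝ)
    (q : Fin k → Fin d → ℝ) (hq_inj : Function.Injective q)
    (hq_cov : ∀ i, ∃ r, x i = q r) (hq_surj : ∀ r, ∃ i, x i = q r)
    (nmin : ℝ)
    (hnmin : nmin = sInf {m : ℝ | ∃ r, m = ((univ.filter fun i => x i = q r).card : ℝ)})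
    (δmin : ℝ)
    (hδmin : δmin = sInf {t : ℝ | ∃ r : Fin k,
      t = sInf {u : ℝ | ∃ ℓ, ℓ ≠ r ∧ u = dist2 (q ℓ) (q r)}})
    (ε : ℝ) (hε0 : 0 ≤ ε) (hε : ∑ i, dist2 (x i) (xh i) ^ 2 ≤ ε ^ 2)
    (γ β : ℝ) (hγ0 : 0 < γ) (hγ1 : γ < 1) (hβ : 1 ≤ β)
    -- (iii)
    (hγβ : (γ / (1 - γ)) * β + γ < 1 - γ)
    (ρ : ℝ) (hρ1 : 2 * ε / Real.sqrt (γ * nmin) ≤ ρ) (hρ2 : ρ < δmin / 3)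
    (Chat : Fin k → Finset (Fin n))
    (hexec : GreedyExec (fun i j => dist2 (xh i) (xh j)) ρ Chat) :
    ∃ σ : Equiv.Perm (Fin k),
      (∑ r, (((univ.filter fun i => x i = q (σ r)) \ Chat r).card : ℝ)) ≤
        8 * ε ^ 2 / ρ ^ 2 ∧
      (∑ r, (((univ.filter fun i => x i = q (σ r)) \ Chat r).card : ℝ)) / n ≤
        8 * ε ^ 2 / (n * ρ ^ 2) := by
  obtain rfl | hk := k.eq_zero_or_pos
  · exact ⟨1, by simp; positivity, by simp; positivity⟩
  have : Nonempty (Fin k) := ⟨⟨0, hk⟩⟩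
  choose lab hlab using hq_cov
  simp only [filter_eq_cluster hq_inj hlab] at hnmin ⊢
  have hnmin_le (c : Fin k) : nmin ≤ #(GreedyCovering.cluster lab c) :=
    hnmin ▸ sInf_le_of_exists_eq _ c
  have hnmin_pos : 0 < nmin := hnmin ▸ one_pos.trans_le (le_sInf_of_exists_eq fun r => by
    obtain ⟨i, hi⟩ := hq_surj r
    exact_mod_cast card_pos.2 ⟨i, GreedyCovering.mem_cluster.2 (hq_inj (hi ▸ hlab i).symm)⟩)
  obtain ⟨hB, hBγ⟩ := card_badSet_le hε0 hε (mul_pos hγ0 hnmin_pos) hρ1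
  have hcluster (c : Fin k) : 3 * #(badSet x xh ρ) < #(GreedyCovering.cluster lab c) := by
    have := hnmin_le c
    have := three_mul_lt_one hγ0 hγ1 hβ hγβ
    exact_mod_cast (by nlinarith : (3 * #(badSet x xh ρ) : ℝ) < #(GreedyCovering.cluster lab c))
  obtain ⟨σ, hσ⟩ := GreedyCovering.exists_perm_sum_card_cluster_sdiff_le hexec
    (fun i j hi hj hij => dist2_le_of_notMem_badSet_of_eq hi hj (by rw [hlab i, hlab j, hij]))
    (fun i j j' hj hj' hij hij' => by_contra fun hne => by
      have := hδmin ▸ sInf_sInf_le_of_ne (fun a b => dist2 (q a) (q b)) hne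
      rw [← hlab, ← hlab] at this
      linarith [dist2_le_three_mul_of_notMem_badSet hj hj' hij hij'])
    hcluster
  have hsum : (∑ r, (#(GreedyCovering.cluster lab (σ r) \ Chat r) : ℝ)) ≤ 8 * ε ^ 2 / ρ ^ 2 :=
    calc _ ≤ (2 * #(badSet x xh ρ) : ℝ) := by exact_mod_cast hσ
      _ ≤ 2 * (4 * ε ^ 2 / ρ ^ 2) := by gcongr
      _ = 8 * ε ^ 2 / ρ ^ 2 := by ring
  refine ⟨σ, hsum, ?_⟩
  rw [← div_div, div_right_comm]
  exact div_le_div_of_nonneg_right hsum n.cast_nonneg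

/-- Theorem B.1 (guarantee for the greedy covering replacement of the k-means step). -/
theorem stmt19 (n d k : ℕ)
    (x xh : Fin n → Fin d → ℝ)
    (q : Fin k → Fin d → ℝ) (hq_inj : Function.Injective q)
    (hq_cov : ∀ i, ∃ r, x i = q r) (hq_surj : ∀ r, ∃ i, x i = q r)
    (nmin : ℝ)
    (hnmin : nmin = sInf {m : ℝ | ∃ r, m = ((univ.filter fun i => x i = q r).card : ℝ)})
    (δmin : ℝ)
    (hδmin : δmin = sInf {t : ℝ | ∃ r : Fin k,
      t = sInf {u : ℝ | ∃ ℓ, ℓ ≠ r ∧ u = dist2 (q ℓ) (q r)}})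
    (ε : ℝ) (hε0 : 0 ≤ ε) (hε : ∑ i, dist2 (x i) (xh i) ^ 2 ≤ ε ^ 2)
    (γ β : ℝ) (hγ0 : 0 < γ) (hγ1 : γ < 1) (hβ : 1 ≤ β)
    -- (i) clusters are β-balanced
    (hbal : ∀ r, ((univ.filter fun i => x i = q r).card : ℝ) ≤ β * nmin)
    -- (ii)
    (hsep : 2 * ε / Real.sqrt (γ * nmin) < δmin / 3)
    -- (iii)
    (hγβ : (γ / (1 - γ)) * β + γ < 1 - γ)
    (ρ : ℝ) (hρ1 : 2 * ε / Real.sqrt (γ * nmin) ≤ ρ) (hρ2 : ρ < δmin / 3)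
    (Chat : Fin k → Finset (Fin n))
    (hexec : GreedyExec (fun i j => dist2 (xh i) (xh j)) ρ Chat) :
    ∃ σ : Equiv.Perm (Fin k),
      (∑ r, (((univ.filter fun i => x i = q (σ r)) \ Chat r).card : ℝ)) ≤
        8 * ε ^ 2 / ρ ^ 2 ∧
      (∑ r, (((univ.filter fun i => x i = q (σ r)) \ Chat r).card : ℝ)) / n ≤
        8 * ε ^ 2 / (n * ρ ^ 2) :=
  stmt19_general n d k x xh q hq_inj hq_cov hq_surj nmin hnmin δmin hδmin ε hε0 hε γ β hγ0 hγ1 hβ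
    hγβ ρ hρ1 hρ2 Chat hexec
end
end
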